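/- Let X₁,…,X_N be i.i.d. random variables with values in [e^{−1}, e] and mean μ, and let a ∈ [e^{−1}, e] be a constant. Then |E[log(a + ∑_{i=1}^N X_i)] − log(a + Nμ)| ≤ (e/N)·E[|∑_{i=1}^N X_i − Nμ|] ≤ e(e − e^{−1})/(2√N) ≤ (e² − 1)/(2√N). -/

import Mathlib

open MeasureTheory ProbabilityTheory

lemma log_lip {a c u v : ℝ} (ha : 0 < a) (hc : 0 < c) (hu : c ≤ u) (hv : c ≤ v) :
    |Real.log (a + u) - Real.log (a + v)| ≤ (1 / c) * |u - v| := by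
  wlog h : v ≤ u generalizing u v
  · rw [abs_sub_comm, abs_sub_comm u v]; exact this hv hu (le_of_not_ge h)
  have h0v : 0 < a + v := by linarith
  have h0u : 0 < a + u := by linarith
  rw [abs_of_nonneg (by linarith : (0:ℝ) ≤ u - v),
    abs_of_nonneg (sub_nonneg.2 (Real.log_le_log h0v (by linarith)))]
  have h1 : Real.log (a + u) - Real.log (a + v) = Real.log ((a + u) / (a + v)) := by
    rw [Real.log_div (by positivity) (by positivity)]
  have h2 : Real.log ((a + u) / (a + v)) ≤ (a + u) / (a + v) - 1 :=
    Real.log_le_sub_one_of_pos (by positivity)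
  have h3 : (a + u) / (a + v) - 1 = (u - v) / (a + v) := by field_simp; ring
  have h4 : (u - v) / (a + v) ≤ (u - v) / c :=
    div_le_div_of_nonneg_left (by linarith) hc (by linarith) |>.trans_eq rfl
  rw [h1]
  calc Real.log ((a+u)/(a+v)) ≤ (u - v) / (a + v) := by linarith
    _ ≤ (u - v) / c := h4
    _ = (1/c) * (u - v) := by ring


/-- With X₁,…,X_N i.i.d. in [e^{−1}, e] with mean μ and a ∈ [e^{−1}, e],
|E[log(a + ∑ X_i)] − log(a + Nμ)| ≤ (e/N)·E[|∑ X_i − Nμ|] ≤ e(e − e^{−1})/(2√N)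
≤ (e² − 1)/(2√N). -/
theorem stmt_7 {Ω : Type*} [MeasurableSpace Ω] (P : Measure Ω) [IsProbabilityMeasure P]
    (N : ℕ) (hN : 1 ≤ N) (X : Fin N → Ω → ℝ)
    (hMeas : ∀ i, Measurable (X i))
    (hIndep : iIndepFun X P)
    (hIdent : ∀ i j, IdentDistrib (X i) (X j) P P)
    (hBdd : ∀ i ω, X i ω ∈ Set.Icc (Real.exp (-1)) (Real.exp 1))
    (μ : ℝ) (hMean : ∀ i, ∫ ω, X i ω ∂P = μ)
    (a : ℝ) (ha : a ∈ Set.Icc (Real.exp (-1)) (Real.exp 1)) :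
    |(∫ ω, Real.log (a + ∑ i, X i ω) ∂P) - Real.log (a + (N : ℝ) * μ)|
        ≤ (Real.exp 1 / (N : ℝ)) * ∫ ω, |(∑ i, X i ω) - (N : ℝ) * μ| ∂P ∧
    (Real.exp 1 / (N : ℝ)) * (∫ ω, |(∑ i, X i ω) - (N : ℝ) * μ| ∂P)
        ≤ Real.exp 1 * (Real.exp 1 - Real.exp (-1)) / (2 * Real.sqrt N) ∧
    Real.exp 1 * (Real.exp 1 - Real.exp (-1)) / (2 * Real.sqrt N)
        ≤ (Real.exp 1 ^ 2 - 1) / (2 * Real.sqrt N) := by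
  have he : (0:ℝ) < Real.exp (-1) := Real.exp_pos _
  have he1 : (0:ℝ) < Real.exp 1 := Real.exp_pos _
  have hNpos : (0:ℝ) < (N:ℝ) := by exact_mod_cast hN
  set S : Ω → ℝ := fun ω => ∑ i, X i ω with hSdef
  have hSmeas : Measurable S := Finset.measurable_sum _ fun i _ => hMeas i
  have hSlo : ∀ ω, (N:ℝ) * Real.exp (-1) ≤ S ω := by
    intro ω
    calc (N:ℝ) * Real.exp (-1) = ∑ _i : Fin N, Real.exp (-1) := by
          simp [Finset.sum_const, mul_comm]
      _ ≤ S ω := Finset.sum_le_sum fun i _ => (hBdd i ω).1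
  have hShi : ∀ ω, S ω ≤ (N:ℝ) * Real.exp 1 := by
    intro ω
    calc S ω ≤ ∑ _i : Fin N, Real.exp 1 := Finset.sum_le_sum fun i _ => (hBdd i ω).2
      _ = (N:ℝ) * Real.exp 1 := by simp [Finset.sum_const, mul_comm]
  have hXint : ∀ i, Integrable (X i) P := fun i =>
    (integrable_const (Real.exp 1)).mono' (hMeas i).aestronglyMeasurable
      (ae_of_all _ fun ω => by
        rw [Real.norm_eq_abs, abs_of_pos (lt_of_lt_of_le he (hBdd i ω).1)]
        exact (hBdd i ω).2)
  have hSint : Integrable S P := integrable_finset_sum _ fun i _ => hXint i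
  -- mean is in the interval
  have hμlo : Real.exp (-1) ≤ μ := by
    rw [← hMean ⟨0, hN⟩]
    calc Real.exp (-1) = ∫ _ω, Real.exp (-1) ∂P := by simp
      _ ≤ _ := integral_mono (integrable_const _) (hXint _) fun ω => (hBdd _ ω).1
  have hNμlo : (N:ℝ) * Real.exp (-1) ≤ (N:ℝ) * μ :=
    mul_le_mul_of_nonneg_left hμlo hNpos.le
  have hcpos : (0:ℝ) < (N:ℝ) * Real.exp (-1) := by positivity
  have hcinv : 1 / ((N:ℝ) * Real.exp (-1)) = Real.exp 1 / (N:ℝ) := by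
    rw [Real.exp_neg]; field_simp
  -- pointwise Lipschitz bound
  have hpt : ∀ ω, |Real.log (a + S ω) - Real.log (a + (N:ℝ) * μ)|
      ≤ (Real.exp 1 / (N:ℝ)) * |S ω - (N:ℝ) * μ| := by
    intro ω
    rw [← hcinv]
    exact log_lip (lt_of_lt_of_le he ha.1) hcpos (hSlo ω) hNμlo
  -- integrability of log term
  have hlogmeas : Measurable fun ω => Real.log (a + S ω) :=
    Real.measurable_log.comp (measurable_const.add hSmeas)
  have hlogint : Integrable (fun ω => Real.log (a + S ω)) P := by
    refine (integrable_const (1 + (a + (N:ℝ) * Real.exp 1))).mono'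
      hlogmeas.aestronglyMeasurable (ae_of_all _ fun ω => ?_)
    have h1 : (0:ℝ) < a + S ω := by have := hSlo ω; have := ha.1; nlinarith
    rw [Real.norm_eq_abs, abs_le]
    constructor
    · have : Real.log (Real.exp (-1)) ≤ Real.log (a + S ω) :=
        Real.log_le_log he (by have := hSlo ω; have := ha.1; nlinarith)
      rw [Real.log_exp] at this
      nlinarith [hSlo ω, ha.1, he1, hNpos]
    · have h2 : Real.log (a + S ω) ≤ (a + S ω) - 1 := Real.log_le_sub_one_of_pos h1
      have := hShi ω
      linarith [ha.2]
  have habs_int : Integrable (fun ω => |S ω - (N:ℝ) * μ|) P :=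
    (hSint.sub (integrable_const _)).abs
  refine ⟨?_, ?_, ?_⟩
  · -- Part 1
    have heq : (∫ ω, Real.log (a + S ω) ∂P) - Real.log (a + (N:ℝ) * μ)
        = ∫ ω, (Real.log (a + S ω) - Real.log (a + (N:ℝ) * μ)) ∂P := by
      rw [integral_sub hlogint (integrable_const _)]; simp
    rw [heq]
    calc |∫ ω, (Real.log (a + S ω) - Real.log (a + (N:ℝ) * μ)) ∂P|
        ≤ ∫ ω, |Real.log (a + S ω) - Real.log (a + (N:ℝ) * μ)| ∂P := by
          simpa [Real.norm_eq_abs] using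
            norm_integral_le_integral_norm
              (fun ω => Real.log (a + S ω) - Real.log (a + (N:ℝ) * μ)) (μ := P)
      _ ≤ ∫ ω, (Real.exp 1 / (N:ℝ)) * |S ω - (N:ℝ) * μ| ∂P :=
          integral_mono ((hlogint.sub (integrable_const _)).abs)
            (habs_int.const_mul _) hpt
      _ = (Real.exp 1 / (N:ℝ)) * ∫ ω, |S ω - (N:ℝ) * μ| ∂P := integral_const_mul _ _
  · -- Part 2
    have hmem2 : ∀ i, MemLp (X i) 2 P := fun i =>
      memLp_of_bounded (ae_of_all _ (hBdd i)) (hMeas i).aestronglyMeasurable 2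
    have hsum_eq : (∑ i, X i) = S := by funext ω; simp [hSdef]
    have hSmem2 : MemLp S 2 P := hsum_eq ▸ memLp_finset_sum' _ fun i _ => hmem2 i
    have hES : ∫ ω, S ω ∂P = (N:ℝ) * μ := by
      rw [hSdef]
      rw [integral_finset_sum _ fun i _ => hXint i]
      simp [hMean, Finset.sum_const, mul_comm]
    -- variance bound
    have hvar : variance S P ≤ (N:ℝ) * ((Real.exp 1 - Real.exp (-1)) / 2) ^ 2 := by
      have hpair : Set.Pairwise ↑(Finset.univ : Finset (Fin N))
          fun i j => IndepFun (X i) (X j) P := fun i _ j _ hij =>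
        hIndep.indepFun hij
      have := IndepFun.variance_sum (μ := P) (X := X) (s := Finset.univ)
        (fun i _ => hmem2 i) hpair
      rw [← hsum_eq, this]
      calc ∑ i, variance (X i) P
          ≤ ∑ _i : Fin N, ((Real.exp 1 - Real.exp (-1)) / 2) ^ 2 :=
            Finset.sum_le_sum fun i _ =>
              variance_le_sq_of_bounded (ae_of_all _ (hBdd i)) (hMeas i).aemeasurable
        _ = (N:ℝ) * ((Real.exp 1 - Real.exp (-1)) / 2) ^ 2 := by
            simp [Finset.sum_const, mul_comm]
    -- E|Y| ≤ sqrt(E Y^2)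
    have hYsq : ∫ ω, (S ω - (N:ℝ) * μ) ^ 2 ∂P = variance S P := by
      rw [variance_eq_integral hSmem2.aemeasurable, hES]
    have hholder : ∫ ω, |S ω - (N:ℝ) * μ| ∂P
        ≤ Real.sqrt (∫ ω, (S ω - (N:ℝ) * μ) ^ 2 ∂P) := by
      have hconj : (2:ℝ).HolderConjugate 2 := by constructor <;> norm_num
      have hY2 : MemLp (fun ω => |S ω - (N:ℝ) * μ|) (ENNReal.ofReal 2) P := by
        rw [show ENNReal.ofReal 2 = 2 by norm_num]
        exact (hSmem2.sub (memLp_const _)).abs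
      have h1 : MemLp (fun _ : Ω => (1:ℝ)) (ENNReal.ofReal 2) P := memLp_const _
      have key := integral_mul_le_Lp_mul_Lq_of_nonneg hconj
        (ae_of_all _ fun ω => abs_nonneg (S ω - (N:ℝ) * μ))
        (ae_of_all (μ := P) fun _ => zero_le_one) hY2 h1
      have e1 : ∫ _ω : Ω, (1:ℝ) ^ (2:ℝ) ∂P = 1 := by
        simp [Real.one_rpow]
      have e2 : ∫ ω, |S ω - (N:ℝ) * μ| ^ (2:ℝ) ∂P = ∫ ω, (S ω - (N:ℝ) * μ) ^ 2 ∂P := by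
        refine integral_congr_ae (ae_of_all _ fun ω => ?_)
        have h3 : |S ω - (N:ℝ) * μ| ^ (2:ℝ) = |S ω - (N:ℝ) * μ| ^ (2:ℕ) := by
          rw [← Real.rpow_natCast]; norm_num
        simp only [h3, sq_abs]
      simp only [mul_one, e1, e2, Real.one_rpow] at key
      rw [Real.sqrt_eq_rpow]
      simpa using key
    have hsqrtN : (0:ℝ) < Real.sqrt N := Real.sqrt_pos.2 hNpos
    have hbound : ∫ ω, |S ω - (N:ℝ) * μ| ∂P
        ≤ Real.sqrt N * ((Real.exp 1 - Real.exp (-1)) / 2) := by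
      refine hholder.trans ?_
      rw [hYsq]
      have h2 : Real.sqrt (variance S P)
          ≤ Real.sqrt ((N:ℝ) * ((Real.exp 1 - Real.exp (-1)) / 2) ^ 2) :=
        Real.sqrt_le_sqrt hvar
      refine h2.trans_eq ?_
      rw [Real.sqrt_mul (by positivity), Real.sqrt_sq (by
        have := Real.exp_le_exp.2 (show (-1:ℝ) ≤ 1 by norm_num); linarith)]
    calc (Real.exp 1 / (N:ℝ)) * ∫ ω, |S ω - (N:ℝ) * μ| ∂P
        ≤ (Real.exp 1 / (N:ℝ)) * (Real.sqrt N * ((Real.exp 1 - Real.exp (-1)) / 2)) := by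
          exact mul_le_mul_of_nonneg_left hbound (by positivity)
      _ = Real.exp 1 * (Real.exp 1 - Real.exp (-1)) / (2 * Real.sqrt N) := by
          field_simp
          ring_nf
          rw [Real.sq_sqrt hNpos.le]
          ring
  · -- Part 3 : equality e(e - e⁻¹) = e² - 1
    have : Real.exp 1 * (Real.exp 1 - Real.exp (-1)) = Real.exp 1 ^ 2 - 1 := by
      have h : Real.exp 1 * Real.exp (-1) = 1 := by
        rw [← Real.exp_add]; norm_num
      nlinarith [h]
    rw [this]
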